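/- arXiv:1910.08738 — 6 statements merged into one kernel-verified Lean document; each statement's English description precedes it below -/
import Mathlib

section
/- Let F be a finite subset of a finite-dimensional real vector space Y. Then the additive subgroup ⟨F⟩ generated by F is closed in Y if and only if it is discrete. -/
/-- The additive subgroup generated by a finite subset of a finite-dimensional
real vector space is closed if and only if it is discrete. -/
theorem stmt0 {Y : Type*} [NormedAddCommGroup Y] [NormedSpace ℝ Y] [FiniteDimensional ℝ Y]
    (F : Set Y) (hF : F.Finite) :
    IsClosed ((AddSubgroup.closure F : AddSubgroup Y) : Set Y) ↔
      DiscreteTopology (AddSubgroup.closure F) := by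
  constructor
  · intro hclosed
    set S := AddSubgroup.closure F with hS
    -- S is countable
    have hFc : F.Countable := hF.countable
    haveI : Countable F := hFc.to_subtype
    haveI hcspan : Countable (Submodule.span ℤ (Set.range (Subtype.val : F → Y))) :=
      inferInstance
    have hrange : Set.range (Subtype.val : F → Y) = F := Subtype.range_coe
    have hspan : (Submodule.span ℤ F).toAddSubgroup = S :=
      Submodule.span_int_eq_addSubgroupClosure F
    haveI hScount : Countable S := by
      rw [← hspan, ← hrange]
      exact hcspan
    -- S is a complete metric space, hence Baire
    haveI : CompleteSpace S := hclosed.completeSpace_coe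
    haveI : BaireSpace S := BaireSpace.of_completelyPseudoMetrizable
    haveI : Nonempty S := ⟨0⟩
    -- Some singleton has nonempty interior
    obtain ⟨x, hx⟩ := nonempty_interior_of_iUnion_of_closed
      (f := fun x : S => ({x} : Set S)) (fun x => isClosed_singleton)
      (by simp [Set.eq_univ_iff_forall])
    have hxopen : IsOpen ({x} : Set S) := by
      have hxmem : x ∈ interior ({x} : Set S) := by
        obtain ⟨y, hy⟩ := hx
        have hyx : y ∈ ({x} : Set S) := interior_subset hy
        simp only [Set.mem_singleton_iff] at hyx
        rwa [hyx] at hy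
      have h1 : interior ({x} : Set S) = {x} :=
        Set.Subset.antisymm interior_subset (Set.singleton_subset_iff.mpr hxmem)
      rw [← h1]; exact isOpen_interior
    -- translate to 0
    have h0 : IsOpen ({0} : Set S) := by
      have : ({0} : Set S) = (fun y : S => y + x) ⁻¹' {x} := by
        ext y; simp [eq_comm]
      rw [this]
      exact hxopen.preimage (by continuity)
    exact discreteTopology_iff_isOpen_singleton_zero.mpr h0
  · intro hdisc
    exact AddSubgroup.isClosed_of_discrete
end

section
/- Let Y be a finite-dimensional real vector space, y₁,…,y_k ∈ Y linearly independent vectors, and z_i = Σ_j a_{ij} y_j for real numbers a_{ij} (1 ≤ i ≤ r, 1 ≤ j ≤ k). Then the additive subgroup of Y generated by y₁,…,y_k, z₁,…,z_r is discrete if and only if all a_{ij} are rational. -/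
open Set Submodule

/-! If the subgroup `G` is discrete, it meets the ball of radius `∑ ‖y j‖` in a finite set. For
`z = ∑ a_j • y j ∈ G` that ball contains `n • z - ∑ ⌊n a_j⌋ • y j = ∑ fract (n a_j) • y j` for every
`n : ℤ`, so two of these coincide, and linear independence gives `fract (n a_j) = fract (m a_j)`
with `n ≠ m`, whence `a_j ∈ ℚ`. Conversely, if `d` is a common denominator of the `a_ij`, then `G`
lies in the `ℤ`-span of the `d⁻¹ • y j`, which is discrete because this family extends to a basis
of `Y`. -/

theorem Int.exists_rat_eq_of_fract_mul_eq {x : ℝ} {n m : ℤ} (hnm : n ≠ m)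
    (h : Int.fract (n * x) = Int.fract (m * x)) : ∃ q : ℚ, x = q := by
  obtain ⟨p, hp⟩ := Int.fract_eq_fract.mp h
  have hnm' : (n : ℝ) - m ≠ 0 := sub_ne_zero.mpr (Int.cast_injective.ne hnm)
  refine ⟨p / (n - m), ?_⟩
  push_cast
  rw [eq_div_iff hnm', ← hp]
  ring

theorem exists_int_ne_zero_forall_mul_eq_int {ι : Type*} [Finite ι] (q : ι → ℚ) :
    ∃ d : ℤ, d ≠ 0 ∧ ∀ i, ∃ m : ℤ, (d : ℚ) * q i = m := by
  obtain ⟨⟨d, hd⟩, hdq⟩ := IsLocalization.exist_integer_multiples_of_finite (nonZeroDivisors ℤ) q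
  refine ⟨d, nonZeroDivisors.ne_zero hd, fun i => ?_⟩
  obtain ⟨m, hm⟩ := hdq i
  exact ⟨m, by simpa using hm.symm⟩

section

variable {Y : Type*} [NormedAddCommGroup Y] [NormedSpace ℝ Y] {ι : Type*}

theorem LinearIndependent.discreteTopology_span_int [FiniteDimensional ℝ Y] {y : ι → Y}
    (hy : LinearIndependent ℝ y) : DiscreteTopology (span ℤ (range y)) := by
  have hli : LinearIndepOn ℝ id (range y) := hy.linearIndepOn_id
  have := Module.Finite.finite_basis (Module.Basis.extend hli)
  have hle : span ℤ (range y) ≤ span ℤ (range (Module.Basis.extend hli)) := by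
    rw [Module.Basis.range_extend]
    exact span_mono (hli.subset_extend _)
  exact DiscreteTopology.of_subset (inferInstanceAs (DiscreteTopology (span ℤ _))) hle

variable [Fintype ι]

theorem norm_sum_fract_smul_le (t : ι → ℝ) (y : ι → Y) :
    ‖∑ j, Int.fract (t j) • y j‖ ≤ ∑ j, ‖y j‖ := by
  refine (norm_sum_le _ _).trans (Finset.sum_le_sum fun j _ => ?_)
  rw [norm_smul, Real.norm_of_nonneg (Int.fract_nonneg _)]
  exact mul_le_of_le_one_left (norm_nonneg _) (Int.fract_lt_one _).le

theorem AddSubgroup.sum_fract_smul_mem (G : AddSubgroup Y) {y : ι → Y} (hy : ∀ j, y j ∈ G)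
    {c : ι → ℝ} (hc : ∑ j, c j • y j ∈ G) (n : ℤ) :
    ∑ j, Int.fract (n * c j) • y j ∈ G := by
  have : ∑ j, Int.fract (n * c j) • y j = n • ∑ j, c j • y j - ∑ j, ⌊n * c j⌋ • y j := by
    simp only [Int.fract, sub_smul, Finset.sum_sub_distrib, Finset.smul_sum, mul_smul,
      Int.cast_smul_eq_zsmul]
  rw [this]
  exact sub_mem (zsmul_mem hc n) (sum_mem fun j _ => zsmul_mem (hy j) _)

theorem AddSubgroup.exists_rat_eq_of_sum_smul_mem [ProperSpace Y] (G : AddSubgroup Y)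
    [DiscreteTopology G] {y : ι → Y} (hy : LinearIndependent ℝ y) (hyG : ∀ j, y j ∈ G)
    {c : ι → ℝ} (hc : ∑ j, c j • y j ∈ G) (j : ι) : ∃ q : ℚ, c j = q := by
  set K := Metric.closedBall (0 : Y) (∑ j, ‖y j‖) ∩ G
  have hK : K.Finite := Metric.finite_isBounded_inter_isClosed DiscreteTopology.isDiscrete
    Metric.isBounded_closedBall AddSubgroup.isClosed_of_discrete
  have hmaps : MapsTo (fun n : ℤ => ∑ j, Int.fract (n * c j) • y j) univ K := fun n _ =>
    ⟨mem_closedBall_zero_iff.mpr (norm_sum_fract_smul_le _ _), G.sum_fract_smul_mem hyG hc n⟩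
  obtain ⟨n, -, m, -, hnm, heq⟩ := infinite_univ.exists_ne_map_eq_of_mapsTo hmaps hK
  exact Int.exists_rat_eq_of_fract_mul_eq hnm (Fintype.linearIndependent_iffₛ.mp hy _ _ heq j)

theorem discreteTopology_closure_of_forall_rat [FiniteDimensional ℝ Y] {κ : Type*} [Finite κ]
    {y : ι → Y} (hy : LinearIndependent ℝ y) (a : κ → ι → ℝ) (ha : ∀ i j, ∃ q : ℚ, a i j = q) :
    DiscreteTopology (AddSubgroup.closure (range y ∪ range fun i => ∑ j, a i j • y j)) := by
  choose q hq using ha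
  obtain ⟨d, hd, hdq⟩ := exists_int_ne_zero_forall_mul_eq_int fun p : κ × ι => q p.1 p.2
  have hd' : (d : ℝ) ≠ 0 := Int.cast_ne_zero.mpr hd
  set L := span ℤ (range fun j => (d : ℝ)⁻¹ • y j)
  have hdivL : ∀ (m : ℤ) j, ((m : ℝ) / d) • y j ∈ L := fun m j => by
    rw [div_eq_mul_inv, mul_smul, Int.cast_smul_eq_zsmul]
    exact zsmul_mem (subset_span (mem_range_self j)) m
  have hyL : ∀ j, y j ∈ L := fun j => by
    simpa [div_self hd'] using hdivL d j
  have hzL : ∀ i, ∑ j, a i j • y j ∈ L := fun i => sum_mem fun j _ => by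
    obtain ⟨m, hm⟩ := hdq (i, j)
    have hm' : (d : ℝ) * q i j = m := by exact_mod_cast hm
    rw [hq, ← mul_div_cancel_left₀ (q i j : ℝ) hd', hm']
    exact hdivL m j
  have hle : AddSubgroup.closure (range y ∪ range fun i => ∑ j, a i j • y j) ≤ L.toAddSubgroup :=
    (AddSubgroup.closure_le _).mpr <|
      union_subset (range_subset_iff.mpr hyL) (range_subset_iff.mpr hzL)
  exact DiscreteTopology.of_subset
    (hy.units_smul fun _ => Units.mk0 _ (inv_ne_zero hd')).discreteTopology_span_int hle

end

/-- If `y₁, …, y_k` are linearly independent vectors in a finite-dimensional real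
vector space and `z_i = ∑_j a_{ij} y_j`, then the additive subgroup generated by
the `y_j` and `z_i` is discrete iff all `a_{ij}` are rational. -/
theorem stmt2 {Y : Type*} [NormedAddCommGroup Y] [NormedSpace ℝ Y] [FiniteDimensional ℝ Y]
    {k r : ℕ} (y : Fin k → Y) (hy : LinearIndependent ℝ y)
    (a : Fin r → Fin k → ℝ) (z : Fin r → Y)
    (hz : ∀ i, z i = ∑ j, a i j • y j) :
    DiscreteTopology (AddSubgroup.closure (Set.range y ∪ Set.range z)) ↔
      ∀ i j, ∃ q : ℚ, a i j = (q : ℝ) := by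
  obtain rfl : z = fun i => ∑ j, a i j • y j := funext hz
  set G := AddSubgroup.closure (range y ∪ range fun i => ∑ j, a i j • y j)
  refine ⟨fun _ i => G.exists_rat_eq_of_sum_smul_mem hy (fun j => ?_) ?_,
    discreteTopology_closure_of_forall_rat hy a⟩
  · exact AddSubgroup.subset_closure (Or.inl (mem_range_self j))
  · exact AddSubgroup.subset_closure (Or.inr (mem_range_self i))
end

section
/- Let G × X → X be a continuous action of a second countable locally compact group G on a Hausdorff space X, and let x₀ ∈ X with orbit O = G·x₀. If O is locally compact in its relative topology, then for every compact neighborhood K of the identity in G there exists a neighborhood V of x₀ in X with V ∩ O ⊆ K·x₀. -/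
/-!
The orbit, being locally compact Hausdorff, is a Baire space on which the σ-compact group
`G` acts transitively. By the Baire category argument behind the open mapping theorem, the
orbit map `g ↦ g • x₀` is then open at `1`, so `K • x₀` is a neighborhood of `x₀` in the
relative topology.
-/

open scoped Pointwise Topology
open MulAction Set

instance continuousSMul_orbit {G X : Type*} [Group G] [TopologicalSpace G]
    [TopologicalSpace X] [MulAction G X] [ContinuousSMul G X] (x : X) :
    ContinuousSMul G (orbit G x) :=
  ⟨(continuous_fst.smul (continuous_subtype_val.comp continuous_snd)).subtype_mk _⟩

theorem exists_nhds_inter_orbit_subset_image_of_sigmaCompact {G X : Type*} [Group G]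
    [TopologicalSpace G] [IsTopologicalGroup G] [SigmaCompactSpace G]
    [TopologicalSpace X] [T2Space X] [MulAction G X] [ContinuousSMul G X]
    {x : X} [BaireSpace (orbit G x)] {U : Set G} (hU : U ∈ 𝓝 1) :
    ∃ V ∈ 𝓝 x, V ∩ orbit G x ⊆ (· • x) '' U := by
  let x' : orbit G x := ⟨x, mem_orbit_self x⟩
  obtain ⟨V, hV, hVU⟩ :=
    (mem_nhds_subtype _ _ _).1 (smul_singleton_mem_nhds_of_sigmaCompact hU x')
  refine ⟨V, hV, fun y hy ↦ ?_⟩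
  obtain ⟨g, hg, hgy⟩ : (⟨y, hy.2⟩ : orbit G x) ∈ (· • x') '' U :=
    smul_singleton (s := U) (b := x') ▸ hVU hy.1
  exact ⟨g, hg, congrArg Subtype.val hgy⟩

/-- If the orbit of `x₀` under a continuous action of a second countable locally
compact group on a Hausdorff space is locally compact in its relative topology,
then for every compact neighborhood `K` of the identity there is a neighborhood
`V` of `x₀` with `V ∩ (G·x₀) ⊆ K·x₀`. -/
theorem stmt4 {G X : Type*} [Group G] [TopologicalSpace G] [IsTopologicalGroup G]
    [LocallyCompactSpace G] [SecondCountableTopology G]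
    [TopologicalSpace X] [T2Space X] [MulAction G X] [ContinuousSMul G X]
    (x₀ : X) (hO : LocallyCompactSpace ↥(MulAction.orbit G x₀)) :
    ∀ K : Set G, K ∈ nhds (1 : G) → IsCompact K →
      ∃ V ∈ nhds x₀, V ∩ MulAction.orbit G x₀ ⊆ (fun g => g • x₀) '' K :=
  fun _ hK _ ↦ exists_nhds_inter_orbit_subset_image_of_sigmaCompact hK
end

section
/- Let G × X → X be a continuous action of a second countable locally compact group G on a Hausdorff space X, and x₀ ∈ X with orbit O = G·x₀. If there exist a compact neighborhood K of the identity in G and a neighborhood V of x₀ in X with V ∩ O ⊆ K·x₀, then O is locally compact in its relative topology. -/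
/-!
The group acts transitively on the orbit `O = G • x₀` by homeomorphisms, so it suffices to find
one compact neighbourhood of `x₀` in `O`. The compact set `K • x₀` lies in `O`, and
`V ∩ O ⊆ K • x₀` makes it a neighbourhood of `x₀` in `O`. A weakly locally compact Hausdorff
space is locally compact.
-/

open MulAction Topology
open scoped Pointwise

instance MulAction.orbit.continuousSMul {G X : Type*} [Group G] [TopologicalSpace G]
    [TopologicalSpace X] [MulAction G X] [ContinuousSMul G X] (x : X) :
    ContinuousSMul G (orbit G x) :=
  ⟨(continuous_fst.smul (continuous_subtype_val.comp continuous_snd)).subtype_mk _⟩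

theorem WeaklyLocallyCompactSpace.of_isPretransitive {G Y : Type*} [Group G] [TopologicalSpace Y]
    [MulAction G Y] [ContinuousConstSMul G Y] [IsPretransitive G Y] {y : Y} {s : Set Y}
    (hs : IsCompact s) (hsy : s ∈ 𝓝 y) : WeaklyLocallyCompactSpace Y where
  exists_compact_mem_nhds z := by
    obtain ⟨g, rfl⟩ := exists_smul_eq G y z
    exact ⟨g • s, hs.smul g, smul_mem_nhds_smul g hsy⟩

theorem stmt5_general {G X : Type*} [Group G] [TopologicalSpace G]
    [TopologicalSpace X] [T2Space X] [MulAction G X] [ContinuousSMul G X]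
    (x₀ : X) (K : Set G) (hKc : IsCompact K)
    (V : Set X) (hV : V ∈ nhds x₀)
    (hVK : V ∩ MulAction.orbit G x₀ ⊆ (fun g => g • x₀) '' K) :
    LocallyCompactSpace ↥(MulAction.orbit G x₀) := by
  let C : Set (orbit G x₀) := Subtype.val ⁻¹' ((fun g => g • x₀) '' K)
  have hC : IsCompact C := by
    refine IsInducing.subtypeVal.isCompact_preimage' (hKc.image (by fun_prop)) ?_
    rintro _ ⟨g, -, rfl⟩
    exact ⟨⟨_, mem_orbit x₀ g⟩, rfl⟩
  have hC_nhds : C ∈ 𝓝 (⟨x₀, mem_orbit_self x₀⟩ : orbit G x₀) :=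
    Filter.mem_of_superset (continuous_subtype_val.continuousAt.preimage_mem_nhds hV)
      fun z hz => hVK ⟨hz, z.2⟩
  have := WeaklyLocallyCompactSpace.of_isPretransitive (G := G) hC hC_nhds
  infer_instance

/-- If there exist a compact neighborhood `K` of the identity and a neighborhood
`V` of `x₀` with `V ∩ (G·x₀) ⊆ K·x₀`, then the orbit `G·x₀` is locally compact
in its relative topology. -/
theorem stmt5 {G X : Type*} [Group G] [TopologicalSpace G] [IsTopologicalGroup G]
    [LocallyCompactSpace G] [SecondCountableTopology G]
    [TopologicalSpace X] [T2Space X] [MulAction G X] [ContinuousSMul G X]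
    (x₀ : X) (K : Set G) (hK : K ∈ nhds (1 : G)) (hKc : IsCompact K)
    (V : Set X) (hV : V ∈ nhds x₀)
    (hVK : V ∩ MulAction.orbit G x₀ ⊆ (fun g => g • x₀) '' K) :
    LocallyCompactSpace ↥(MulAction.orbit G x₀) :=
  stmt5_general x₀ K hKc V hV hVK
end

section
/- Let G act continuously on locally compact noncompact Hausdorff spaces, with G a locally compact noncompact group, and let x₀ ∈ X. If the map g ↦ g·x₀ tends to infinity as g → ∞ (i.e., for every compact subset L of X there is a compact subset C of G such that g·x₀ ∉ L for g ∉ C), then the orbit G·x₀ is locally closed in X. -/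
/-! The hypothesis says that the orbit map `g ↦ g • x₀` tends to infinity along the cocompact
filters, so (`X` being Hausdorff and locally compact) it is a proper map. Proper maps are closed,
hence the orbit, which is the range of the orbit map, is even closed. -/

open Filter

theorem MulAction.isClosed_orbit_of_tendsto_cocompact {G X : Type*} [Monoid G]
    [TopologicalSpace G] [TopologicalSpace X] [T2Space X] [CompactlyCoherentSpace X]
    [MulAction G X] [ContinuousSMul G X] {x₀ : X}
    (h : Tendsto (· • x₀) (cocompact G) (cocompact X)) : IsClosed (orbit G x₀) :=
  (isProperMap_iff_tendsto_cocompact.2 ⟨continuous_id.smul continuous_const, h⟩).isClosed_range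

theorem stmt6_general {G X : Type*} [Group G] [TopologicalSpace G]
    [TopologicalSpace X] [T2Space X] [LocallyCompactSpace X]
    [MulAction G X] [ContinuousSMul G X]
    (x₀ : X)
    (hinf : ∀ L : Set X, IsCompact L → ∃ C : Set G, IsCompact C ∧ ∀ g ∉ C, g • x₀ ∉ L) :
    IsLocallyClosed (MulAction.orbit G x₀) := by
  refine (MulAction.isClosed_orbit_of_tendsto_cocompact ?_).isLocallyClosed
  exact (hasBasis_cocompact.tendsto_iff hasBasis_cocompact).2 hinf

/-- If `g ↦ g • x₀` tends to infinity (escapes every compact subset of `X`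
outside compact subsets of `G`), then the orbit `G·x₀` is locally closed. -/
theorem stmt6 {G X : Type*} [Group G] [TopologicalSpace G] [IsTopologicalGroup G]
    [LocallyCompactSpace G] [NoncompactSpace G]
    [TopologicalSpace X] [T2Space X] [LocallyCompactSpace X] [NoncompactSpace X]
    [MulAction G X] [ContinuousSMul G X]
    (x₀ : X)
    (hinf : ∀ L : Set X, IsCompact L → ∃ C : Set G, IsCompact C ∧ ∀ g ∉ C, g • x₀ ∉ L) :
    IsLocallyClosed (MulAction.orbit G x₀) :=
  stmt6_general x₀ hinf
end

section
/- Let D ∈ End(V) for V a finite-dimensional real vector space, and let V₋, V₀, V₊ be the sums of real generalized eigenspaces of D corresponding to eigenvalues with negative, zero, and positive real parts respectively, so V = V₋ ⊕ V₀ ⊕ V₊. Suppose D acts as −id on V₋, as id on V₊, and arbitrarily (with purely imaginary spectrum) on V₀. If v ∈ V has nonzero component in V₋ or V₊, then the orbit {e^{tD} v : t ∈ ℝ} is a locally closed subset of V. -/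
open Filter Topology


private lemma expApplyEigen {V : Type*} [NormedAddCommGroup V] [NormedSpace ℝ V]
    [CompleteSpace V] (A : V →L[ℝ] V) (c : ℝ) (x : V) (hx : A x = c • x) :
    NormedSpace.exp A x = Real.exp c • x := by
  have hpow : ∀ n : ℕ, (A ^ n) x = c ^ n • x := by
    intro n
    induction n with
    | zero => simp
    | succ n ih =>
      rw [pow_succ, ContinuousLinearMap.mul_apply, hx, map_smul, ih, smul_smul, mul_comm,
        ← pow_succ]
  have hs := NormedSpace.expSeries_summable' (𝕂 := ℝ) A
  have hs' := NormedSpace.expSeries_summable' (𝕂 := ℝ) (𝔸 := ℝ) c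
  calc NormedSpace.exp A x
      = (ContinuousLinearMap.apply ℝ V x) (∑' (n : ℕ), ((Nat.factorial n : ℝ))⁻¹ • A ^ n) := by
        rw [NormedSpace.exp_eq_tsum ℝ]
        rfl
    _ = ∑' (n : ℕ), (ContinuousLinearMap.apply ℝ V x) (((Nat.factorial n : ℝ))⁻¹ • A ^ n) :=
        (ContinuousLinearMap.apply ℝ V x).map_tsum hs
    _ = ∑' (n : ℕ), (((Nat.factorial n : ℝ))⁻¹ • c ^ n) • x := by
        simp [hpow, smul_smul]
    _ = (∑' (n : ℕ), ((Nat.factorial n : ℝ))⁻¹ • c ^ n) • x := hs'.tsum_smul_const x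
    _ = Real.exp c • x := by
        rw [Real.exp_eq_exp_ℝ, NormedSpace.exp_eq_tsum ℝ]


private lemma expMemSubmodule {V : Type*} [NormedAddCommGroup V] [NormedSpace ℝ V]
    [FiniteDimensional ℝ V] (A : V →L[ℝ] V) (W : Submodule ℝ V)
    (h : ∀ x ∈ W, A x ∈ W) {x : V} (hx : x ∈ W) : NormedSpace.exp A x ∈ W := by
  have hpow : ∀ n : ℕ, (A ^ n) x ∈ W := by
    intro n
    induction n with
    | zero => simpa using hx
    | succ n ih =>
      rw [pow_succ', ContinuousLinearMap.mul_apply]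
      exact h _ ih
  have hs := NormedSpace.expSeries_summable' (𝕂 := ℝ) A
  have happ : NormedSpace.exp A x
      = ∑' (n : ℕ), ((Nat.factorial n : ℝ))⁻¹ • (A ^ n) x := by
    calc NormedSpace.exp A x
        = (ContinuousLinearMap.apply ℝ V x)
            (∑' (n : ℕ), ((Nat.factorial n : ℝ))⁻¹ • A ^ n) := by
          rw [NormedSpace.exp_eq_tsum ℝ]
          rfl
      _ = ∑' (n : ℕ), (ContinuousLinearMap.apply ℝ V x)
            (((Nat.factorial n : ℝ))⁻¹ • A ^ n) :=
          (ContinuousLinearMap.apply ℝ V x).map_tsum hs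
      _ = ∑' (n : ℕ), ((Nat.factorial n : ℝ))⁻¹ • (A ^ n) x := by simp
  have hsum : Summable fun n : ℕ => ((Nat.factorial n : ℝ))⁻¹ • (A ^ n) x := by
    have := hs.map ((ContinuousLinearMap.apply ℝ V x) : (V →L[ℝ] V) →+ V)
      (ContinuousLinearMap.apply ℝ V x).continuous
    exact this
  rw [happ]
  have hcl : IsClosed (W : Set V) := Submodule.closed_of_finiteDimensional W
  refine hcl.mem_of_tendsto hsum.hasSum (Filter.Eventually.of_forall fun s => ?_)
  exact Submodule.sum_mem W fun i _ => Submodule.smul_mem W _ (hpow i)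
/-- If `V = V₋ ⊕ V₀ ⊕ V₊` with `D = -id` on `V₋`, `D = id` on `V₊`, and `D`
preserving `V₀` with purely imaginary spectrum there, then for any `v` whose
`V₋`- or `V₊`-component is nonzero, the orbit `{e^{tD} v : t ∈ ℝ}` is locally
closed in `V`. -/
theorem stmt19 {V : Type*} [NormedAddCommGroup V] [NormedSpace ℝ V] [FiniteDimensional ℝ V]
    (D : V →L[ℝ] V) (Vm V0 Vp : Submodule ℝ V)
    (hspan : ∀ w : V, ∃ a ∈ Vm, ∃ b ∈ V0, ∃ c ∈ Vp, w = a + b + c)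
    (hind : ∀ a ∈ Vm, ∀ b ∈ V0, ∀ c ∈ Vp, a + b + c = 0 → a = 0 ∧ b = 0 ∧ c = 0)
    (hm : ∀ x ∈ Vm, D x = -x) (hp : ∀ x ∈ Vp, D x = x)
    (h0 : ∀ x ∈ V0, (D : V →ₗ[ℝ] V) x ∈ V0)
    (hspec : ∀ z : ℂ, (Polynomial.map (algebraMap ℝ ℂ)
        (LinearMap.charpoly ((D : V →ₗ[ℝ] V).restrict h0))).IsRoot z → z.re = 0)
    (v vm v0 vp : V) (hvm : vm ∈ Vm) (hv0 : v0 ∈ V0) (hvp : vp ∈ Vp)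
    (hv : v = vm + v0 + vp) (hne : vm ≠ 0 ∨ vp ≠ 0) :
    IsLocallyClosed {x : V | ∃ t : ℝ, x = NormedSpace.exp (t • D) v} := by
  classical
  haveI : CompleteSpace V := FiniteDimensional.complete ℝ V
  -- complementarity
  have hcm : IsCompl Vm (V0 ⊔ Vp) := by
    constructor
    · rw [Submodule.disjoint_def]
      intro a ha hab
      rcases Submodule.mem_sup.mp hab with ⟨b, hb, c, hc, habc⟩
      refine (hind a ha (-b) (neg_mem hb) (-c) (neg_mem hc) ?_).1
      rw [← habc]; abel
    · rw [codisjoint_iff, eq_top_iff]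
      intro w _
      rcases hspan w with ⟨a, ha, b, hb, c, hc, hw⟩
      rw [hw, add_assoc]
      exact Submodule.add_mem _ (Submodule.mem_sup_left ha)
        (Submodule.mem_sup_right (Submodule.add_mem _ (Submodule.mem_sup_left hb)
          (Submodule.mem_sup_right hc)))
  have hcp : IsCompl Vp (Vm ⊔ V0) := by
    constructor
    · rw [Submodule.disjoint_def]
      intro c hc hab
      rcases Submodule.mem_sup.mp hab with ⟨a, ha, b, hb, habc⟩
      have := (hind a ha b hb (-c) (neg_mem hc) (by rw [habc]; abel)).2.2
      simpa [neg_eq_zero] using this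
    · rw [codisjoint_iff, eq_top_iff]
      intro w _
      rcases hspan w with ⟨a, ha, b, hb, c, hc, hw⟩
      rw [hw]
      exact Submodule.add_mem _
        (Submodule.mem_sup_right (Submodule.add_mem _ (Submodule.mem_sup_left ha)
          (Submodule.mem_sup_right hb)))
        (Submodule.mem_sup_left hc)
  -- projections
  set Pm : V →ₗ[ℝ] V := Vm.subtype ∘ₗ (Vm.projectionOnto (V0 ⊔ Vp) hcm) with hPmdef
  set Pp : V →ₗ[ℝ] V := Vp.subtype ∘ₗ (Vp.projectionOnto (Vm ⊔ V0) hcp) with hPpdef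
  have hPmc : Continuous Pm := Pm.continuous_of_finiteDimensional
  have hPpc : Continuous Pp := Pp.continuous_of_finiteDimensional
  have hPm_left : ∀ x, x ∈ Vm → Pm x = x := fun x hx => by
    rw [hPmdef, LinearMap.comp_apply, Submodule.projectionOnto_apply_of_mem_left hcm hx]
    rfl
  have hPm_right : ∀ x, x ∈ V0 ⊔ Vp → Pm x = 0 := fun x hx => by
    rw [hPmdef, LinearMap.comp_apply, Submodule.projectionOnto_apply_of_mem_right hcm hx, map_zero]
  have hPp_left : ∀ x, x ∈ Vp → Pp x = x := fun x hx => by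
    rw [hPpdef, LinearMap.comp_apply, Submodule.projectionOnto_apply_of_mem_left hcp hx]
    rfl
  have hPp_right : ∀ x, x ∈ Vm ⊔ V0 → Pp x = 0 := fun x hx => by
    rw [hPpdef, LinearMap.comp_apply, Submodule.projectionOnto_apply_of_mem_right hcp hx, map_zero]
  -- orbit formula
  have horb : ∀ t : ℝ, ∃ y ∈ V0, NormedSpace.exp (t • D) v
      = Real.exp (-t) • vm + y + Real.exp t • vp := by
    intro t
    refine ⟨NormedSpace.exp (t • D) v0, ?_, ?_⟩
    · refine expMemSubmodule (t • D) V0 (fun x hx => ?_) hv0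
      have := Submodule.smul_mem V0 t (h0 x hx)
      simpa using this
    · rw [hv, map_add, map_add]
      congr 1
      congr 1
      exact expApplyEigen (t • D) (-t) vm
        (by rw [ContinuousLinearMap.smul_apply, hm vm hvm, smul_neg, neg_smul])
      exact expApplyEigen (t • D) t vp
        (by rw [ContinuousLinearMap.smul_apply, hp vp hvp])
  have hPmE : ∀ t : ℝ, Pm (NormedSpace.exp (t • D) v) = Real.exp (-t) • vm := by
    intro t
    obtain ⟨y, hy, hEt⟩ := horb t
    rw [hEt, map_add, map_add, map_smul, map_smul, hPm_left vm hvm,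
      hPm_right y (Submodule.mem_sup_left hy), hPm_right vp (Submodule.mem_sup_right hvp)]
    simp
  have hPpE : ∀ t : ℝ, Pp (NormedSpace.exp (t • D) v) = Real.exp t • vp := by
    intro t
    obtain ⟨y, hy, hEt⟩ := horb t
    rw [hEt, map_add, map_add, map_smul, map_smul,
      hPp_right vm (Submodule.mem_sup_left hvm), hPp_right y (Submodule.mem_sup_right hy),
      hPp_left vp hvp]
    simp
  -- continuity of the orbit map
  have hEcont : Continuous fun t : ℝ => NormedSpace.exp (t • D) v := by
    have h1 : Continuous fun t : ℝ => t • D := continuous_id.smul continuous_const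
    exact (ContinuousLinearMap.apply ℝ V v).continuous.comp
      ((continuous_iff_continuousAt.2 fun y =>
        (NormedSpace.exp_analytic (𝕂 := ℝ) y).continuousAt).comp h1)
  set S := {x : V | ∃ t : ℝ, x = NormedSpace.exp (t • D) v} with hSdef
  set U := {x : V | Pm x ≠ 0} ∪ {x : V | Pp x ≠ 0} with hUdef
  have hUopen : IsOpen U := by
    refine IsOpen.union ?_ ?_
    · exact isOpen_compl_singleton.preimage hPmc
    · exact isOpen_compl_singleton.preimage hPpc
  have hkey : S = U ∩ closure S := by
    apply Set.Subset.antisymm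
    · rintro x ⟨t, rfl⟩
      refine ⟨?_, subset_closure ⟨t, rfl⟩⟩
      cases hne with
      | inl h => exact Or.inl (by
          simp only [Set.mem_setOf_eq, hPmE t]
          exact smul_ne_zero (Real.exp_ne_zero _) h)
      | inr h => exact Or.inr (by
          simp only [Set.mem_setOf_eq, hPpE t]
          exact smul_ne_zero (Real.exp_ne_zero _) h)
    · rintro x ⟨hxU, hxcl⟩
      obtain ⟨u, huS, hulim⟩ := mem_closure_iff_seq_limit.mp hxcl
      choose ts hts using huS
      cases hxU with
      | inl hPmx =>
        have h1 : Filter.Tendsto (fun n => Real.exp (-ts n) • vm) Filter.atTop (nhds (Pm x)) := by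
          have h0' : Filter.Tendsto (fun n => Pm (u n)) Filter.atTop (nhds (Pm x)) :=
            (hPmc.tendsto _).comp hulim
          simpa [hts, hPmE] using h0'
        have hvm0 : vm ≠ 0 := by
          rintro rfl
          have h1' : Filter.Tendsto (fun _ : ℕ => (0 : V)) Filter.atTop (nhds (Pm x)) := by
            simpa using h1
          exact hPmx (tendsto_nhds_unique h1' tendsto_const_nhds)
        have h2 : Filter.Tendsto (fun n => Real.exp (-ts n)) Filter.atTop
            (nhds (‖Pm x‖ / ‖vm‖)) := by
          have h3 : Filter.Tendsto (fun n => ‖Real.exp (-ts n) • vm‖) Filter.atTop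
              (nhds ‖Pm x‖) := (continuous_norm.tendsto _).comp h1
          have h4 : ∀ n, ‖Real.exp (-ts n) • vm‖ = Real.exp (-ts n) * ‖vm‖ := fun n => by
            rw [norm_smul, Real.norm_eq_abs, abs_of_pos (Real.exp_pos _)]
          simp_rw [h4] at h3
          have h5 := h3.div_const ‖vm‖
          simpa [mul_div_assoc, div_self (norm_ne_zero_iff.mpr hvm0)] using h5
        have hLpos : 0 < ‖Pm x‖ / ‖vm‖ :=
          div_pos (norm_pos_iff.mpr hPmx) (norm_pos_iff.mpr hvm0)
        have h6 : Filter.Tendsto ts Filter.atTop (nhds (-Real.log (‖Pm x‖ / ‖vm‖))) := by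
          have h7 : Filter.Tendsto (fun n => Real.log (Real.exp (-ts n))) Filter.atTop
              (nhds (Real.log (‖Pm x‖ / ‖vm‖))) :=
            ((Real.continuousAt_log hLpos.ne').tendsto).comp h2
          simp_rw [Real.log_exp] at h7
          simpa using h7.neg
        refine ⟨-Real.log (‖Pm x‖ / ‖vm‖), ?_⟩
        have h8 : Filter.Tendsto u Filter.atTop
            (nhds (NormedSpace.exp ((-Real.log (‖Pm x‖ / ‖vm‖)) • D) v)) := by
          have h9 := (hEcont.tendsto _).comp h6
          rw [show ((fun t : ℝ => NormedSpace.exp (t • D) v) ∘ ts) = u from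
            funext fun n => (hts n).symm] at h9
          exact h9
        exact tendsto_nhds_unique hulim h8
      | inr hPpx =>
        have h1 : Filter.Tendsto (fun n => Real.exp (ts n) • vp) Filter.atTop (nhds (Pp x)) := by
          have h0' : Filter.Tendsto (fun n => Pp (u n)) Filter.atTop (nhds (Pp x)) :=
            (hPpc.tendsto _).comp hulim
          simpa [hts, hPpE] using h0'
        have hvp0 : vp ≠ 0 := by
          rintro rfl
          have h1' : Filter.Tendsto (fun _ : ℕ => (0 : V)) Filter.atTop (nhds (Pp x)) := by
            simpa using h1
          exact hPpx (tendsto_nhds_unique h1' tendsto_const_nhds)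
        have h2 : Filter.Tendsto (fun n => Real.exp (ts n)) Filter.atTop
            (nhds (‖Pp x‖ / ‖vp‖)) := by
          have h3 : Filter.Tendsto (fun n => ‖Real.exp (ts n) • vp‖) Filter.atTop
              (nhds ‖Pp x‖) := (continuous_norm.tendsto _).comp h1
          have h4 : ∀ n, ‖Real.exp (ts n) • vp‖ = Real.exp (ts n) * ‖vp‖ := fun n => by
            rw [norm_smul, Real.norm_eq_abs, abs_of_pos (Real.exp_pos _)]
          simp_rw [h4] at h3
          have h5 := h3.div_const ‖vp‖
          simpa [mul_div_assoc, div_self (norm_ne_zero_iff.mpr hvp0)] using h5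
        have hLpos : 0 < ‖Pp x‖ / ‖vp‖ :=
          div_pos (norm_pos_iff.mpr hPpx) (norm_pos_iff.mpr hvp0)
        have h6 : Filter.Tendsto ts Filter.atTop (nhds (Real.log (‖Pp x‖ / ‖vp‖))) := by
          have h7 : Filter.Tendsto (fun n => Real.log (Real.exp (ts n))) Filter.atTop
              (nhds (Real.log (‖Pp x‖ / ‖vp‖))) :=
            ((Real.continuousAt_log hLpos.ne').tendsto).comp h2
          simpa [Real.log_exp] using h7
        refine ⟨Real.log (‖Pp x‖ / ‖vp‖), ?_⟩
        have h8 : Filter.Tendsto u Filter.atTop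
            (nhds (NormedSpace.exp ((Real.log (‖Pp x‖ / ‖vp‖)) • D) v)) := by
          have h9 := (hEcont.tendsto _).comp h6
          rw [show ((fun t : ℝ => NormedSpace.exp (t • D) v) ∘ ts) = u from
            funext fun n => (hts n).symm] at h9
          exact h9
        exact tendsto_nhds_unique hulim h8
  exact ⟨U, closure S, hUopen, isClosed_closure, hkey⟩
end
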